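/- Let C be a bivariate copula concentrated on the two diagonals with diagonal δ(u) = C(u,u) and let α(u) = ∫₀ᵘ δ(t) dt. Then ∫₀¹∫₀¹ C(u,v) du dv = 8·∫₀^{1/2} α(u) du + 1/6. -/

import Mathlib

open MeasureTheory Set

noncomputable section

/-- A bivariate copula on `[0,1]²`. -/
def IsCopula (C : ℝ → ℝ → ℝ) : Prop :=
  (∀ u ∈ Icc (0:ℝ) 1, ∀ v ∈ Icc (0:ℝ) 1, C u v ∈ Icc (0:ℝ) 1) ∧
  (∀ u ∈ Icc (0:ℝ) 1, C u 0 = 0 ∧ C 0 u = 0 ∧ C u 1 = u ∧ C 1 u = u) ∧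
  (∀ u₁ u₂ v₁ v₂ : ℝ, 0 ≤ u₁ → u₁ ≤ u₂ → u₂ ≤ 1 → 0 ≤ v₁ → v₁ ≤ v₂ → v₂ ≤ 1 →
    0 ≤ C u₂ v₂ - C u₂ v₁ - C u₁ v₂ + C u₁ v₁)

/-- Spearman's rho of a copula. -/
def spearmanRho (C : ℝ → ℝ → ℝ) : ℝ :=
  12 * (∫ u in (0:ℝ)..1, ∫ v in (0:ℝ)..1, C u v) - 3

/-- Spearman's footrule of a copula. -/
def spearmanFootrule (C : ℝ → ℝ → ℝ) : ℝ :=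
  6 * (∫ u in (0:ℝ)..1, C u u) - 2

/-- A copula whose mass is concentrated on the main and opposite diagonal:
its values are determined by its diagonal `δ(u) = C(u,u)` as stated. -/
def ConcentratedOnDiagonals (C : ℝ → ℝ → ℝ) : Prop :=
  ∀ u ∈ Icc (0:ℝ) 1, ∀ v ∈ Icc (0:ℝ) 1,
    (u ≤ v → v ≤ 1 - u → C u v = C u u) ∧
    (v ≤ u → u ≤ 1 - v → C u v = C v v) ∧
    (1 - u ≤ v → v ≤ u → C u v = C u u + v - u) ∧
    (1 - v ≤ u → u ≤ v → C u v = C v v + u - v)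

open intervalIntegral

/-! Both diagonals are axes of symmetry of the mass of `C`, so `C` is radially symmetric:
`C(1-u, 1-v) = C(u,v) + 1 - u - v`. Hence `G(u) = ∫₀¹ C(u,v) dv` satisfies
`G(1-u) = G(u) + 1/2 - u`, and `∫₀¹ G = 2 ∫₀^{1/2} G + 1/8`. For `u ≤ 1/2` the points `u` and
`1-u` cut the section `v ↦ C(u,v)` into the pieces `δ(v)`, `δ(u)`, `δ(v) + u - v`; together with
`δ(1-t) = δ(t) + 1 - 2t` this gives `G(u) = 2α(u) + (1-2u)δ(u) + u²/2`, and integration by parts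
turns `∫₀^{1/2} (1-2u)δ(u) du` into `2 ∫₀^{1/2} α`. -/

theorem integral_sub_mul_eq_integral_primitive {f : ℝ → ℝ} {a b : ℝ} (hab : a ≤ b)
    (hf : ContinuousOn f (Icc a b)) :
    ∫ t in a..b, (b - t) * f t = ∫ t in a..b, ∫ s in a..t, f s := by
  have hf_int : IntervalIntegrable f volume a b := hf.intervalIntegrable_of_Icc hab
  have primitive_deriv : ∀ x ∈ Ioo (min a b) (max a b),
      HasDerivAt (fun t => ∫ s in a..t, f s) (f x) x := by
    rw [min_eq_left hab, max_eq_right hab]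
    intro x hx
    exact integral_hasDerivAt_right
      ((hf.mono (Icc_subset_Icc_right hx.2.le)).intervalIntegrable_of_Icc hx.1.le)
      ((hf.mono Ioo_subset_Icc_self).stronglyMeasurableAtFilter isOpen_Ioo x hx)
      (hf.continuousAt (Icc_mem_nhds hx.1 hx.2))
  rw [integral_mul_deriv_eq_deriv_mul_of_hasDerivAt (u' := fun _ => -1) (by fun_prop)
    (continuousOn_primitive_interval (uIcc_of_le hab ▸ hf.integrableOn_Icc))
    (fun x _ => by simpa using (hasDerivAt_id x).const_sub b)
    primitive_deriv intervalIntegrable_const hf_int]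
  simp

theorem integral_zero_one_of_one_sub_eq {G : ℝ → ℝ}
    (hG : IntervalIntegrable G volume 0 1)
    (hG_refl : ∀ u ∈ Icc (0:ℝ) 1, G (1 - u) = G u + 1/2 - u) :
    ∫ u in (0:ℝ)..1, G u = 2 * (∫ u in (0:ℝ)..(1/2), G u) + 1/8 := by
  have half_mem : (1/2 : ℝ) ∈ uIcc 0 1 := by rw [uIcc_of_le zero_le_one]; norm_num
  have hG₁ := hG.mono_set (uIcc_subset_uIcc_left half_mem)
  have reflect : ∫ u in (1/2 : ℝ)..1, G u = ∫ u in (0:ℝ)..(1/2), (G u + (1/2 - u)) := calc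
    ∫ u in (1/2 : ℝ)..1, G u = ∫ u in (0:ℝ)..(1/2), G (1 - u) := by
      rw [integral_comp_sub_left]; norm_num
    _ = ∫ u in (0:ℝ)..(1/2), (G u + (1/2 - u)) := integral_congr fun u hu => by
      rw [uIcc_of_le (by norm_num)] at hu
      simp only [hG_refl u ⟨hu.1, hu.2.trans (by norm_num)⟩]; ring
  rw [← integral_add_adjacent_intervals hG₁ (hG.mono_set (uIcc_subset_uIcc_right half_mem)),
    reflect, integral_add hG₁ ((by fun_prop : Continuous _).intervalIntegrable _ _),
    integral_sub intervalIntegrable_const intervalIntegrable_id]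
  norm_num; ring

namespace IsCopula

variable {C : ℝ → ℝ → ℝ} {u v a b : ℝ}

theorem monotoneOn_right (hC : IsCopula C) (hu : u ∈ Icc (0:ℝ) 1) :
    MonotoneOn (C u) (Icc 0 1) := by
  intro v₁ h₁ v₂ h₂ hv
  have := hC.2.2 0 u v₁ v₂ le_rfl hu.1 hu.2 h₁.1 hv h₂.2
  linarith [(hC.2.1 v₁ h₁).2.1, (hC.2.1 v₂ h₂).2.1]

theorem monotoneOn_left (hC : IsCopula C) (hv : v ∈ Icc (0:ℝ) 1) :
    MonotoneOn (fun u => C u v) (Icc 0 1) := by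
  intro u₁ h₁ u₂ h₂ hu
  have := hC.2.2 u₁ u₂ 0 v h₁.1 hu h₂.2 le_rfl hv.1 hv.2
  linarith [(hC.2.1 u₁ h₁).1, (hC.2.1 u₂ h₂).1]

theorem lipschitzOnWith_right (hC : IsCopula C) (hu : u ∈ Icc (0:ℝ) 1) :
    LipschitzOnWith 1 (C u) (Icc 0 1) := by
  refine LipschitzOnWith.of_le_add fun x hx y hy => ?_
  rcases le_total x y with hxy | hyx
  · linarith [hC.monotoneOn_right hu hx hy hxy, dist_nonneg (x := x) (y := y)]
  · have := hC.2.2 u 1 y x hu.1 hu.2 le_rfl hy.1 hyx hx.2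
    linarith [(hC.2.1 x hx).2.2.2, (hC.2.1 y hy).2.2.2, le_abs_self (x - y), Real.dist_eq x y]

theorem lipschitzOnWith_left (hC : IsCopula C) (hv : v ∈ Icc (0:ℝ) 1) :
    LipschitzOnWith 1 (fun u => C u v) (Icc 0 1) := by
  refine LipschitzOnWith.of_le_add fun x hx y hy => ?_
  rcases le_total x y with hxy | hyx
  · linarith [hC.monotoneOn_left hv hx hy hxy, dist_nonneg (x := x) (y := y)]
  · have := hC.2.2 y x v 1 hy.1 hyx hx.2 hv.1 hv.2 le_rfl
    linarith [(hC.2.1 x hx).2.2.1, (hC.2.1 y hy).2.2.1, le_abs_self (x - y), Real.dist_eq x y]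

theorem lipschitzOnWith_diag (hC : IsCopula C) :
    LipschitzOnWith 2 (fun t => C t t) (Icc 0 1) :=
  LipschitzOnWith.of_le_add_mul 2 fun x hx y hy => by
    have h₁ := (hC.lipschitzOnWith_right hx).dist_le_mul x hx y hy
    have h₂ := (hC.lipschitzOnWith_left hy).dist_le_mul x hx y hy
    rw [Real.dist_eq, NNReal.coe_one, one_mul] at h₁ h₂
    push_cast
    linarith [le_abs_self (C x x - C x y), le_abs_self (C x y - C y y)]

theorem continuousOn_diag (hC : IsCopula C) : ContinuousOn (fun t => C t t) (Icc 0 1) :=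
  hC.lipschitzOnWith_diag.continuousOn

theorem intervalIntegrable_right (hC : IsCopula C) (hu : u ∈ Icc (0:ℝ) 1)
    (ha : a ∈ Icc (0:ℝ) 1) (hb : b ∈ Icc (0:ℝ) 1) : IntervalIntegrable (C u) volume a b :=
  ((hC.monotoneOn_right hu).mono (uIcc_subset_Icc ha hb)).intervalIntegrable

theorem intervalIntegrable_diag (hC : IsCopula C) (ha : a ∈ Icc (0:ℝ) 1)
    (hb : b ∈ Icc (0:ℝ) 1) : IntervalIntegrable (fun t => C t t) volume a b :=
  (hC.continuousOn_diag.mono (uIcc_subset_Icc ha hb)).intervalIntegrable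

theorem intervalIntegrable_integral_right (hC : IsCopula C) :
    IntervalIntegrable (fun u => ∫ v in (0:ℝ)..1, C u v) volume 0 1 := by
  have unit_mem : (0:ℝ) ∈ Icc (0:ℝ) 1 ∧ (1:ℝ) ∈ Icc (0:ℝ) 1 := by norm_num
  refine MonotoneOn.intervalIntegrable ?_
  rw [uIcc_of_le zero_le_one]
  intro u₁ h₁ u₂ h₂ hu
  exact integral_mono_on zero_le_one (hC.intervalIntegrable_right h₁ unit_mem.1 unit_mem.2)
    (hC.intervalIntegrable_right h₂ unit_mem.1 unit_mem.2)
    fun v hv => hC.monotoneOn_left hv h₁ h₂ hu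

end IsCopula

namespace ConcentratedOnDiagonals

variable {C : ℝ → ℝ → ℝ} {t u v : ℝ}

theorem diag_one_sub (hD : ConcentratedOnDiagonals C) (ht : t ∈ Icc (0:ℝ) 1) :
    C (1 - t) (1 - t) = C t t + 1 - 2 * t := by
  have h := hD (1 - t) ⟨by linarith [ht.2], by linarith [ht.1]⟩ t ht
  rcases le_total t (1/2) with ht' | ht'
  · linarith [h.2.1 (by linarith) le_rfl, h.2.2.1 (by linarith) (by linarith)]
  · linarith [h.1 (by linarith) (by linarith), h.2.2.2 (by linarith) (by linarith)]

theorem apply_one_sub_one_sub (hD : ConcentratedOnDiagonals C) (hu : u ∈ Icc (0:ℝ) 1)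
    (hv : v ∈ Icc (0:ℝ) 1) : C (1 - u) (1 - v) = C u v + 1 - u - v := by
  have h := hD u hu v hv
  have h' := hD (1 - u) ⟨by linarith [hu.2], by linarith [hu.1]⟩
    (1 - v) ⟨by linarith [hv.2], by linarith [hv.1]⟩
  rcases le_total u v with huv | hvu <;> rcases le_total (u + v) 1 with hs | hs
  · rw [h.1 huv (by linarith), h'.2.2.1 (by linarith) (by linarith), hD.diag_one_sub hu]; ring
  · rw [h.2.2.2 (by linarith) huv, h'.2.1 (by linarith) (by linarith), hD.diag_one_sub hv]; ring
  · rw [h.2.1 hvu (by linarith), h'.2.2.2 (by linarith) (by linarith), hD.diag_one_sub hv]; ring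
  · rw [h.2.2.1 (by linarith) hvu, h'.1 (by linarith) (by linarith), hD.diag_one_sub hu]; ring

theorem integral_diag_one_sub (hD : ConcentratedOnDiagonals C) (hC : IsCopula C)
    (hu : u ∈ Icc (0:ℝ) 1) :
    ∫ v in (1 - u)..1, C v v = (∫ t in (0:ℝ)..u, C t t) + u - u ^ 2 := by
  have zero_mem : (0:ℝ) ∈ Icc (0:ℝ) 1 := by norm_num
  calc ∫ v in (1 - u)..1, C v v = ∫ t in (0:ℝ)..u, C (1 - t) (1 - t) := by
        rw [integral_comp_sub_left (fun v => C v v)]; norm_num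
    _ = ∫ t in (0:ℝ)..u, (C t t + (1 - 2 * t)) := integral_congr fun t ht => by
        rw [uIcc_of_le hu.1] at ht
        simp only [hD.diag_one_sub ⟨ht.1, ht.2.trans hu.2⟩]; ring
    _ = (∫ t in (0:ℝ)..u, C t t) + u - u ^ 2 := by
        rw [integral_add (hC.intervalIntegrable_diag zero_mem hu)
          ((by fun_prop : Continuous _).intervalIntegrable _ _),
          integral_sub intervalIntegrable_const (intervalIntegrable_id.const_mul 2),
          intervalIntegral.integral_const_mul]
        simp; ring

theorem integral_right_of_le_half (hD : ConcentratedOnDiagonals C) (hC : IsCopula C)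
    (hu : u ∈ Icc (0:ℝ) (1/2)) :
    ∫ v in (0:ℝ)..1, C u v = 2 * ((∫ t in (0:ℝ)..u, C t t) + (1/2 - u) * C u u) + u ^ 2 / 2 := by
  have hu₁ : u ∈ Icc (0:ℝ) 1 := ⟨hu.1, by linarith [hu.2]⟩
  have hu₂ : 1 - u ∈ Icc (0:ℝ) 1 := ⟨by linarith [hu.2], by linarith [hu.1]⟩
  have unit_mem : (0:ℝ) ∈ Icc (0:ℝ) 1 ∧ (1:ℝ) ∈ Icc (0:ℝ) 1 := by norm_num
  have split : ∫ v in (0:ℝ)..1, C u v = (∫ v in (0:ℝ)..u, C u v)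
      + (∫ v in u..(1 - u), C u v) + ∫ v in (1 - u)..1, C u v := by
    rw [integral_add_adjacent_intervals (hC.intervalIntegrable_right hu₁ unit_mem.1 hu₁)
        (hC.intervalIntegrable_right hu₁ hu₁ hu₂),
      integral_add_adjacent_intervals (hC.intervalIntegrable_right hu₁ unit_mem.1 hu₂)
        (hC.intervalIntegrable_right hu₁ hu₂ unit_mem.2)]
  have lower : ∫ v in (0:ℝ)..u, C u v = ∫ t in (0:ℝ)..u, C t t :=
    integral_congr fun v hv => by
      rw [uIcc_of_le hu.1] at hv
      exact (hD u hu₁ v ⟨hv.1, hv.2.trans hu₁.2⟩).2.1 hv.2 (by linarith [hv.2, hu.2])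
  have middle : ∫ v in u..(1 - u), C u v = (1 - 2 * u) * C u u := by
    rw [integral_congr (g := fun _ => C u u) fun v hv => ?_, intervalIntegral.integral_const,
      smul_eq_mul]
    · ring
    rw [uIcc_of_le (by linarith [hu.2])] at hv
    exact (hD u hu₁ v ⟨by linarith [hv.1, hu.1], by linarith [hv.2, hu.1]⟩).1 hv.1 hv.2
  have upper : ∫ v in (1 - u)..1, C u v = ∫ v in (1 - u)..1, (C v v + (u - v)) :=
    integral_congr fun v hv => by
      rw [uIcc_of_le hu₂.2] at hv
      have := (hD u hu₁ v ⟨hu₂.1.trans hv.1, hv.2⟩).2.2.2 (by linarith [hv.1])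
        (by linarith [hv.1, hu.2])
      simp only [this]; ring
  rw [split, lower, middle, upper,
    integral_add (hC.intervalIntegrable_diag hu₂ unit_mem.2)
      ((by fun_prop : Continuous _).intervalIntegrable _ _),
    hD.integral_diag_one_sub hC hu₁, integral_sub intervalIntegrable_const intervalIntegrable_id]
  simp; ring

theorem integral_right_one_sub (hD : ConcentratedOnDiagonals C) (hC : IsCopula C)
    (hu : u ∈ Icc (0:ℝ) 1) :
    ∫ v in (0:ℝ)..1, C (1 - u) v = (∫ v in (0:ℝ)..1, C u v) + 1/2 - u := by
  have unit_mem : (0:ℝ) ∈ Icc (0:ℝ) 1 ∧ (1:ℝ) ∈ Icc (0:ℝ) 1 := by norm_num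
  calc ∫ v in (0:ℝ)..1, C (1 - u) v = ∫ v in (0:ℝ)..1, C (1 - u) (1 - v) := by
        rw [integral_comp_sub_left (fun v => C (1 - u) v)]; norm_num
    _ = ∫ v in (0:ℝ)..1, (C u v + (1 - u - v)) := integral_congr fun v hv => by
        rw [uIcc_of_le zero_le_one] at hv
        simp only [hD.apply_one_sub_one_sub hu hv]; ring
    _ = (∫ v in (0:ℝ)..1, C u v) + 1/2 - u := by
        rw [integral_add (hC.intervalIntegrable_right hu unit_mem.1 unit_mem.2)
          ((by fun_prop : Continuous _).intervalIntegrable _ _),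
          integral_sub intervalIntegrable_const intervalIntegrable_id]
        simp; ring

end ConcentratedOnDiagonals

theorem double_integral_via_alpha (C : ℝ → ℝ → ℝ) (hC : IsCopula C)
    (hD : ConcentratedOnDiagonals C)
    (α : ℝ → ℝ) (hα : ∀ u : ℝ, α u = ∫ t in (0:ℝ)..u, C t t) :
    (∫ u in (0:ℝ)..1, ∫ v in (0:ℝ)..1, C u v) = 8 * (∫ u in (0:ℝ)..(1/2), α u) + 1/6 := by
  have hhalf : (0:ℝ) ≤ 1/2 := by norm_num
  have hδ : ContinuousOn (fun t => C t t) (Icc 0 (1/2)) :=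
    hC.continuousOn_diag.mono (Icc_subset_Icc_right (by norm_num))
  have hδ' : ContinuousOn (fun t => C t t) (uIcc 0 (1/2)) := by rwa [uIcc_of_le hhalf]
  have hP : ContinuousOn (fun u => ∫ t in (0:ℝ)..u, C t t) (uIcc 0 (1/2)) :=
    continuousOn_primitive_interval hδ'.integrableOn_uIcc
  have hmid : ContinuousOn (fun u => (1/2 - u) * C u u) (uIcc 0 (1/2)) :=
    (continuousOn_const.sub continuousOn_id).mul hδ'
  rw [integral_zero_one_of_one_sub_eq hC.intervalIntegrable_integral_right
      fun u hu => hD.integral_right_one_sub hC hu,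
    integral_congr fun u hu =>
      hD.integral_right_of_le_half hC (by rwa [uIcc_of_le hhalf] at hu),
    intervalIntegral.integral_add
      (f := fun u => 2 * ((∫ t in (0:ℝ)..u, C t t) + (1/2 - u) * C u u))
      ((hP.add hmid).intervalIntegrable.const_mul 2)
      ((by fun_prop : Continuous fun u : ℝ => u ^ 2 / 2).intervalIntegrable _ _),
    intervalIntegral.integral_const_mul,
    intervalIntegral.integral_add hP.intervalIntegrable hmid.intervalIntegrable,
    integral_sub_mul_eq_integral_primitive hhalf hδ]
  simp only [hα]
  norm_num; ring
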